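/- arXiv:1202.5257 — 4 statements merged into one kernel-verified Lean document; each statement's English description precedes it below -/
import Mathlib

section
/- For every real γ > −1, the function f(κ) = (γ+2) Li_{γ+2}(e^κ) − κ · Li_{γ+1}(e^κ) is strictly increasing on the interval (−∞, 0). (This expresses that the entropy of the γ-parameter ideal Bose gas is strictly increasing in the chemical potential μ < 0, so its maximum is approached as μ → 0.) -/
/-- Polylogarithm Li_s(z) = ∑_{n=1}^∞ z^n / n^s. -/
noncomputable def polylog (s z : ℝ) : ℝ := ∑' n : ℕ, z ^ (n + 1) / (n + 1 : ℝ) ^ s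

/-!
With `s = γ + 1`, expanding both polylogarithms termwise gives
`(s + 1) Li_{s+1}(e^κ) - κ Li_s(e^κ) = ∑_{n ≥ 1} g(nκ) / n^(s+1)` with `g t = e^t (s + 1 - t)`.
Since `g' t = e^t (s - t) > 0` for `t < s`, every term is strictly increasing in `κ < 0`,
hence so is the sum.
-/

open Real Set

lemma hasSum_polylog {s z : ℝ} (hs : 0 ≤ s) (hz₀ : 0 ≤ z) (hz₁ : z < 1) :
    HasSum (fun n : ℕ => z ^ (n + 1) / (n + 1 : ℝ) ^ s) (polylog s z) := by
  have hgeom : Summable fun n : ℕ => z ^ (n + 1) :=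
    (summable_nat_add_iff 1).mpr (summable_geometric_of_lt_one hz₀ hz₁)
  refine (hgeom.of_nonneg_of_le (fun n => by positivity) fun n => ?_).hasSum
  exact div_le_self (by positivity) (one_le_rpow (by linarith [n.cast_nonneg (α := ℝ)]) hs)

lemma strictMonoOn_exp_mul_sub (a : ℝ) :
    StrictMonoOn (fun t => exp t * (a - t)) (Iic (a - 1)) := by
  refine strictMonoOn_of_hasDerivWithinAt_pos (convex_Iic _) (by fun_prop)
    (f' := fun t => exp t * (a - 1 - t)) (fun t _ => ?_) fun t ht => ?_
  · have h : HasDerivAt (fun t => exp t * (a - t)) (exp t * (a - t) + exp t * -1) t :=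
      (hasDerivAt_exp t).mul ((hasDerivAt_id' t).const_sub a)
    exact (h.congr_deriv (by ring)).hasDerivWithinAt
  · rw [interior_Iic, mem_Iio] at ht
    exact mul_pos (exp_pos t) (by linarith)

lemma hasSum_polylog_entropy {s κ : ℝ} (hs : 0 ≤ s) (hκ : κ < 0) :
    HasSum (fun n : ℕ => exp ((n + 1) * κ) * (s + 1 - (n + 1) * κ) / (n + 1 : ℝ) ^ (s + 1))
      ((s + 1) * polylog (s + 1) (exp κ) - κ * polylog s (exp κ)) := by
  have hz₀ := (exp_pos κ).le
  have hz₁ := exp_lt_one_iff.mpr hκ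
  refine (((hasSum_polylog (by linarith) hz₀ hz₁).mul_left (s + 1)).sub
    ((hasSum_polylog hs hz₀ hz₁).mul_left κ)).congr_fun fun n => ?_
  have hn : (0 : ℝ) < n + 1 := by positivity
  rw [rpow_add_one hn.ne', ← exp_nat_mul]
  push_cast
  field_simp

lemma strictMonoOn_polylog_entropy_term {s : ℝ} (hs : 0 ≤ s) (n : ℕ) :
    StrictMonoOn (fun κ => exp ((n + 1) * κ) * (s + 1 - (n + 1) * κ) / (n + 1 : ℝ) ^ (s + 1))
      (Iio 0) := by
  have hn : (0 : ℝ) < n + 1 := by positivity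
  intro a ha b hb hab
  refine div_lt_div_of_pos_right ?_ (by positivity)
  refine strictMonoOn_exp_mul_sub (s + 1) ?_ ?_ (by gcongr)
  · rw [mem_Iic]; nlinarith [mem_Iio.mp ha]
  · rw [mem_Iic]; nlinarith [mem_Iio.mp hb]

theorem strictMonoOn_polylog_entropy {s : ℝ} (hs : 0 ≤ s) :
    StrictMonoOn (fun κ => (s + 1) * polylog (s + 1) (exp κ) - κ * polylog s (exp κ))
      (Iio 0) := fun _ ha _ hb hab =>
  hasSum_lt (fun n => (strictMonoOn_polylog_entropy_term hs n ha hb hab).le)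
    (strictMonoOn_polylog_entropy_term hs 0 ha hb hab)
    (hasSum_polylog_entropy hs ha) (hasSum_polylog_entropy hs hb)

/-- For every real γ > −1, the function
f(κ) = (γ+2)·Li_{γ+2}(e^κ) − κ·Li_{γ+1}(e^κ) is strictly increasing on (−∞, 0):
the entropy of the γ-parameter ideal Bose gas is strictly increasing in the
chemical potential μ < 0. -/
theorem entropy_strictMonoOn_neg_chemical_potential (γ : ℝ) (hγ : -1 < γ) :
    StrictMonoOn
      (fun κ : ℝ =>
        (γ + 2) * polylog (γ + 2) (Real.exp κ) - κ * polylog (γ + 1) (Real.exp κ))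
      (Set.Iio 0) := by
  simpa only [show γ + 1 + 1 = γ + 2 by ring] using
    strictMonoOn_polylog_entropy (s := γ + 1) (by linarith)
end

section
/- For every real γ > 0, sup_{κ < 0} [ (γ+2) Li_{γ+2}(e^κ) − κ · Li_{γ+1}(e^κ) ] = (γ+2) ζ(γ+2), and moreover (γ+2) Li_{γ+2}(e^κ) − κ · Li_{γ+1}(e^κ) → (γ+2) ζ(γ+2) as κ → 0⁻. (This identifies the maximal entropy value S|_{μ=0} = C(2+γ) ζ(γ+2) T^{γ+1} of formula (56) of the paper.) -/
/-- Riemann zeta function as a real series: ζ(s) = ∑_{n=1}^∞ n^{−s}. -/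
noncomputable def zetaR (s : ℝ) : ℝ := ∑' n : ℕ, 1 / (n + 1 : ℝ) ^ s

open Real Filter Set

private lemma npos (n : ℕ) : (0:ℝ) < (n+1:ℝ) := by positivity

private lemma summable_zetaR {s : ℝ} (hs : 1 < s) :
    Summable (fun n : ℕ => 1/(n+1:ℝ)^s) := by
  have h := (Real.summable_one_div_nat_rpow (p := s)).mpr hs
  have h2 : Summable ((fun n : ℕ => 1 / (n:ℝ) ^ s) ∘ (fun n : ℕ => n + 1)) :=
    h.comp_injective (fun a b hab => by omega)
  simpa [Function.comp_def] using h2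

private lemma term_nonneg {s z : ℝ} (hz : 0 ≤ z) (n : ℕ) :
    0 ≤ z ^ (n+1) / (n+1:ℝ) ^ s := by positivity

private lemma term_le {s z : ℝ} (hz : 0 ≤ z) (hz1 : z ≤ 1) (n : ℕ) :
    z ^ (n+1) / (n+1:ℝ) ^ s ≤ 1 / (n+1:ℝ) ^ s := by
  have h : z ^ (n+1) ≤ 1 := pow_le_one₀ hz hz1
  have hp : (0:ℝ) < (n+1:ℝ) ^ s := Real.rpow_pos_of_pos (npos n) s
  exact div_le_div_of_nonneg_right h hp.le

private lemma summable_polylog {s z : ℝ} (hs : 1 < s) (hz : 0 ≤ z) (hz1 : z ≤ 1) :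
    Summable (fun n : ℕ => z ^ (n+1) / (n+1:ℝ) ^ s) :=
  (summable_zetaR hs).of_nonneg_of_le (term_nonneg hz) (term_le hz hz1)

private lemma polylog_nonneg {s z : ℝ} (hs : 1 < s) (hz : 0 ≤ z) (hz1 : z ≤ 1) :
    0 ≤ polylog s z :=
  tsum_nonneg (term_nonneg hz)

/-- key pointwise inequality: e^{-x}(a+x) ≤ a for a ≥ 1, x ≥ 0. -/
private lemma key {a x : ℝ} (ha : 1 ≤ a) (hx : 0 ≤ x) :
    Real.exp (-x) * (a + x) ≤ a := by
  have h1 : a + x ≤ a * Real.exp x := by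
    nlinarith [Real.add_one_le_exp x]
  have hp : 0 < Real.exp x := Real.exp_pos x
  rw [Real.exp_neg, inv_mul_le_iff₀ hp]
  linarith

/-- upper bound: f κ ≤ (γ+2) ζ(γ+2) for κ ≤ 0 -/
private lemma f_le {γ κ : ℝ} (hγ : 0 < γ) (hκ : κ ≤ 0) :
    (γ + 2) * polylog (γ + 2) (Real.exp κ) - κ * polylog (γ + 1) (Real.exp κ)
      ≤ (γ + 2) * zetaR (γ + 2) := by
  set z := Real.exp κ with hzdef
  have hz0 : 0 ≤ z := (Real.exp_pos κ).le
  have hz1 : z ≤ 1 := Real.exp_le_one_iff.mpr hκ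
  have h1 : (1:ℝ) < γ + 1 := by linarith
  have h2 : (1:ℝ) < γ + 2 := by linarith
  have sa := summable_polylog (z := z) h2 hz0 hz1
  have sb := summable_polylog (z := z) h1 hz0 hz1
  have sz := summable_zetaR h2
  have hL : (γ + 2) * polylog (γ + 2) z - κ * polylog (γ + 1) z
      = ∑' n : ℕ, ((γ+2) * (z ^ (n+1) / (n+1:ℝ) ^ (γ+2))
          - κ * (z ^ (n+1) / (n+1:ℝ) ^ (γ+1))) := by
    rw [polylog, polylog, ← tsum_mul_left, ← tsum_mul_left,
      ← Summable.tsum_sub (sa.mul_left (γ+2)) (sb.mul_left κ)]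
  rw [hL]
  have hR : (γ + 2) * zetaR (γ + 2) = ∑' n : ℕ, (γ+2) * (1 / (n+1:ℝ) ^ (γ+2)) := by
    rw [zetaR, ← tsum_mul_left]
  rw [hR]
  apply Summable.tsum_le_tsum _ ((sa.mul_left (γ+2)).sub (sb.mul_left κ)) (sz.mul_left (γ+2))
  intro n
  set t : ℝ := (n+1:ℝ) with ht
  have htp : 0 < t := npos n
  have hpow : t ^ (γ+2) = t ^ (γ+1) * t := by
    have : γ + 2 = (γ + 1) + 1 := by ring
    rw [this, Real.rpow_add_one htp.ne' (γ+1)]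
  have hz : z ^ (n+1) = Real.exp (-(-κ * t)) := by
    rw [hzdef, ← Real.exp_nat_mul]
    congr 1
    push_cast [ht]
    ring
  have hkey := key (a := γ + 2) (x := -κ * t) (by linarith) (by nlinarith)
  rw [← hz] at hkey
  have hp2 : 0 < t ^ (γ+2) := Real.rpow_pos_of_pos htp _
  have hp1 : 0 < t ^ (γ+1) := Real.rpow_pos_of_pos htp _
  have expand : (γ+2) * (z ^ (n+1) / t ^ (γ+2)) - κ * (z ^ (n+1) / t ^ (γ+1))
      = (z ^ (n+1) * ((γ+2) + -κ * t)) / t ^ (γ+2) := by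
    rw [hpow]
    field_simp
    ring
  rw [expand, mul_one_div, div_le_div_iff₀ hp2 hp2]
  nlinarith [pow_nonneg hz0 (n+1)]

/-- lower bound: (γ+2)(ζ(γ+2) + κ ζ(γ+1)) ≤ f κ for κ ≤ 0 -/
private lemma f_ge {γ κ : ℝ} (hγ : 0 < γ) (hκ : κ ≤ 0) :
    (γ + 2) * (zetaR (γ + 2) + κ * zetaR (γ + 1))
      ≤ (γ + 2) * polylog (γ + 2) (Real.exp κ) - κ * polylog (γ + 1) (Real.exp κ) := by
  set z := Real.exp κ with hzdef
  have hz0 : 0 ≤ z := (Real.exp_pos κ).le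
  have hz1 : z ≤ 1 := Real.exp_le_one_iff.mpr hκ
  have h1 : (1:ℝ) < γ + 1 := by linarith
  have h2 : (1:ℝ) < γ + 2 := by linarith
  have sa := summable_polylog (z := z) h2 hz0 hz1
  have sz2 := summable_zetaR h2
  have sz1 := summable_zetaR h1
  have hb : 0 ≤ -κ * polylog (γ + 1) z := by
    have := polylog_nonneg (z := z) h1 hz0 hz1
    nlinarith
  have hpoly : zetaR (γ + 2) + κ * zetaR (γ + 1) ≤ polylog (γ + 2) z := by
    have hdiff : zetaR (γ + 2) - polylog (γ + 2) z ≤ -κ * zetaR (γ + 1) := by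
      have hL : zetaR (γ + 2) - polylog (γ + 2) z
          = ∑' n : ℕ, (1 / (n+1:ℝ) ^ (γ+2) - z ^ (n+1) / (n+1:ℝ) ^ (γ+2)) := by
        rw [zetaR, polylog, ← Summable.tsum_sub sz2 sa]
      have hR : -κ * zetaR (γ + 1) = ∑' n : ℕ, -κ * (1 / (n+1:ℝ) ^ (γ+1)) := by
        rw [zetaR, ← tsum_mul_left]
      rw [hL, hR]
      apply Summable.tsum_le_tsum _ (sz2.sub sa) (sz1.mul_left (-κ))
      intro n
      set t : ℝ := (n+1:ℝ) with ht
      have htp : 0 < t := npos n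
      have hpow : t ^ (γ+2) = t ^ (γ+1) * t := by
        have : γ + 2 = (γ + 1) + 1 := by ring
        rw [this, Real.rpow_add_one htp.ne' (γ+1)]
      have hz : z ^ (n+1) = Real.exp (κ * t) := by
        rw [hzdef, ← Real.exp_nat_mul]
        congr 1
        push_cast [ht]
        ring
      have hexp : 1 + κ * t ≤ z ^ (n+1) := by
        rw [hz]; linarith [Real.add_one_le_exp (κ * t)]
      have hp2 : 0 < t ^ (γ+2) := Real.rpow_pos_of_pos htp _
      have hp1 : 0 < t ^ (γ+1) := Real.rpow_pos_of_pos htp _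
      have : 1 / t ^ (γ+2) - z ^ (n+1) / t ^ (γ+2) = (1 - z ^ (n+1)) / t ^ (γ+2) := by ring
      rw [this]
      rw [div_le_iff₀ hp2]
      have : -κ * (1 / t ^ (γ+1)) * t ^ (γ+2) = -κ * t := by
        rw [hpow]; field_simp
      rw [this]
      nlinarith
    linarith
  nlinarith

/-- For every real γ > 0, the supremum over κ < 0 of
(γ+2)·Li_{γ+2}(e^κ) − κ·Li_{γ+1}(e^κ) equals (γ+2)·ζ(γ+2), and the expression
tends to (γ+2)·ζ(γ+2) as κ → 0⁻: the maximal entropy value S|_{μ=0}. -/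
theorem entropy_sup_eq_and_tendsto (γ : ℝ) (hγ : 0 < γ) :
    sSup ((fun κ : ℝ =>
        (γ + 2) * polylog (γ + 2) (Real.exp κ) - κ * polylog (γ + 1) (Real.exp κ)) ''
        Set.Iio 0) = (γ + 2) * zetaR (γ + 2) ∧
    Filter.Tendsto
      (fun κ : ℝ =>
        (γ + 2) * polylog (γ + 2) (Real.exp κ) - κ * polylog (γ + 1) (Real.exp κ))
      (nhdsWithin 0 (Set.Iio 0)) (nhds ((γ + 2) * zetaR (γ + 2))) := by
  set f : ℝ → ℝ := fun κ =>
    (γ + 2) * polylog (γ + 2) (Real.exp κ) - κ * polylog (γ + 1) (Real.exp κ) with hf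
  have hmem : ∀ᶠ κ in nhdsWithin (0:ℝ) (Set.Iio 0), κ ∈ Set.Iio (0:ℝ) :=
    eventually_mem_nhdsWithin
  have htend : Filter.Tendsto f (nhdsWithin 0 (Set.Iio 0))
      (nhds ((γ + 2) * zetaR (γ + 2))) := by
    have hg : Filter.Tendsto (fun κ : ℝ => (γ + 2) * (zetaR (γ + 2) + κ * zetaR (γ + 1)))
        (nhdsWithin 0 (Set.Iio 0)) (nhds ((γ + 2) * zetaR (γ + 2))) := by
      have : Continuous (fun κ : ℝ => (γ + 2) * (zetaR (γ + 2) + κ * zetaR (γ + 1))) := by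
        continuity
      have h0 := this.tendsto 0
      simp only [zero_mul, add_zero] at h0
      exact h0.mono_left nhdsWithin_le_nhds
    refine tendsto_of_tendsto_of_tendsto_of_le_of_le' hg tendsto_const_nhds ?_ ?_
    · filter_upwards [hmem] with κ hκ
      exact f_ge hγ (le_of_lt hκ)
    · filter_upwards [hmem] with κ hκ
      exact f_le hγ (le_of_lt hκ)
  refine ⟨?_, htend⟩
  have hne : (f '' Set.Iio 0).Nonempty := ⟨f (-1), ⟨-1, by norm_num, rfl⟩⟩
  apply IsLUB.csSup_eq _ hne
  constructor
  · rintro x ⟨κ, hκ, rfl⟩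
    exact f_le hγ (le_of_lt hκ)
  · intro b hb
    refine le_of_tendsto htend ?_
    filter_upwards [hmem] with κ hκ
    exact hb ⟨κ, hκ, rfl⟩
end

section
/- Let S̃ : (0,∞) → ℝ be continuous with S̃(p) > 0 for all p > 0, suppose S̃(p)/p⁴ → L as p → 0⁺ for some constant L ∈ (0,∞), and suppose there exist c > 0 and R > 0 with S̃(p) ≥ c·p for all p ≥ R. For ν > 0 define p_ν = (∫₀^∞ e^{−S̃(ξ)/ν} ξ dξ) / (∫₀^∞ e^{−S̃(ξ)/ν} dξ). Then ν^{−1/4} · p_ν → L^{−1/4} · Γ(1/2)/Γ(1/4) as ν → 0⁺; in particular p_ν = const · ν^{1/4} (1 + o(1)). -/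
/-!
Substituting `ξ = ν^{1/n} t` turns the moment `∫₀^∞ e^{-S(ξ)/ν} ξ^k dξ` into
`ν^{(k+1)/n} ∫₀^∞ e^{-S(ν^{1/n} t)/ν} t^k dt`, whose integrand tends to `e^{-L tⁿ} tᵏ`.
For `ν ≤ 1` it is dominated by `(e^{-L tⁿ/2} + e^{-b t}) tᵏ`, because `S ξ ≥ min (L ξⁿ/2) (b ξ)`:
near `0` by the limit, on a compact middle range by continuity and positivity, and at infinity by
the linear growth. Dominated convergence and `∫₀^∞ e^{-L tⁿ} tᵏ dt = L^{-(k+1)/n} Γ((k+1)/n)/n`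
give the rescaled moments; for `n = 4` the quotient of the first and zeroth is the claim.
-/

open Real MeasureTheory Set Filter Topology

noncomputable def laplaceMoment (S : ℝ → ℝ) (ν : ℝ) (k : ℕ) : ℝ :=
  ∫ ξ in Ioi 0, exp (-S ξ / ν) * ξ ^ k

lemma integrableOn_exp_neg_mul_pow_mul_pow {b : ℝ} (hb : 0 < b) {n : ℕ} (hn : n ≠ 0) (k : ℕ) :
    IntegrableOn (fun t : ℝ => exp (-(b * t ^ n)) * t ^ k) (Ioi 0) := by
  refine (integrableOn_rpow_mul_exp_neg_mul_rpow (s := k) (p := n)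
    (neg_one_lt_zero.trans_le k.cast_nonneg) (by positivity) hb).congr_fun
    (fun t _ => ?_) measurableSet_Ioi
  dsimp only
  rw [rpow_natCast, rpow_natCast, neg_mul, mul_comm]

lemma integral_exp_neg_mul_pow_mul_pow {b : ℝ} (hb : 0 < b) {n : ℕ} (hn : n ≠ 0) (k : ℕ) :
    ∫ t in Ioi 0, exp (-(b * t ^ n)) * t ^ k =
      b ^ (-(k + 1 : ℝ) / n) * (1 / n) * Gamma ((k + 1) / n) := by
  rw [← integral_rpow_mul_exp_neg_mul_rpow (by positivity)
    (neg_one_lt_zero.trans_le k.cast_nonneg) hb]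
  refine setIntegral_congr_fun measurableSet_Ioi fun t _ => ?_
  rw [rpow_natCast, rpow_natCast, neg_mul, mul_comm]

lemma setIntegral_Ioi_mul_pow_comp_mul_left (f : ℝ → ℝ) (k : ℕ) {a : ℝ} (ha : 0 < a) :
    ∫ ξ in Ioi 0, f ξ * ξ ^ k = a ^ (k + 1) * ∫ t in Ioi 0, f (a * t) * t ^ k := by
  have h := integral_comp_mul_left_Ioi' (fun ξ => f ξ * ξ ^ k) 0 ha
  simp only [mul_zero, smul_eq_mul, mul_pow] at h
  rw [← h, pow_succ', mul_assoc, ← integral_const_mul (a ^ k)]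
  congr 1
  exact integral_congr_ae (ae_of_all _ fun t => by ring)

lemma exists_min_pow_linear_le {S : ℝ → ℝ} (hcont : ContinuousOn S (Ioi 0))
    (hpos : ∀ p : ℝ, 0 < p → 0 < S p) {a : ℝ} {n : ℕ}
    (hsmall : ∀ᶠ ξ in 𝓝[>] 0, a * ξ ^ n ≤ S ξ)
    (hgrow : ∃ c > (0 : ℝ), ∃ R > (0 : ℝ), ∀ p ≥ R, c * p ≤ S p) :
    ∃ b > 0, ∀ ξ > 0, min (a * ξ ^ n) (b * ξ) ≤ S ξ := by
  obtain ⟨c, hc, R, hR, hgrow⟩ := hgrow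
  obtain ⟨δ, hδ, hsmall⟩ := mem_nhdsGT_iff_exists_Ioo_subset.mp hsmall
  set d := min δ R
  have hd : 0 < d := lt_min hδ hR
  obtain ⟨x₀, hx₀, hmin⟩ := isCompact_Icc.exists_isMinOn (nonempty_Icc.mpr (min_le_right δ R))
    (hcont.mono fun x hx => hd.trans_le hx.1)
  have hm : 0 < S x₀ := hpos _ (hd.trans_le hx₀.1)
  refine ⟨min c (S x₀ / R), lt_min hc (div_pos hm hR), fun ξ hξ => ?_⟩
  rcases lt_or_ge ξ d with hξd | hdξ
  · exact (min_le_left _ _).trans (hsmall ⟨hξ, hξd.trans_le (min_le_left _ _)⟩)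
  refine (min_le_right _ _).trans ?_
  rcases le_or_gt ξ R with hξR | hRξ
  · calc min c (S x₀ / R) * ξ ≤ S x₀ / R * R := by gcongr; exact min_le_right _ _
      _ = S x₀ := div_mul_cancel₀ _ hR.ne'
      _ ≤ S ξ := hmin ⟨hdξ, hξR⟩
  · calc min c (S x₀ / R) * ξ ≤ c * ξ := by gcongr; exact min_le_left _ _
      _ ≤ S ξ := hgrow ξ hRξ.le

lemma exp_neg_div_le_of_min_pow_linear_le {S : ℝ → ℝ} {a b : ℝ} {n : ℕ} (hn : n ≠ 0)
    (hb : 0 ≤ b) (hS : ∀ ξ > 0, min (a * ξ ^ n) (b * ξ) ≤ S ξ) {ν : ℝ} (hν : ν ∈ Ioc 0 1)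
    {t : ℝ} (ht : 0 < t) :
    exp (-S (ν ^ (n⁻¹ : ℝ) * t) / ν) ≤ exp (-(a * t ^ n)) + exp (-(b * t)) := by
  obtain ⟨hν0, hν1⟩ := hν
  have hr : 0 < ν ^ (n⁻¹ : ℝ) := rpow_pos_of_pos hν0 _
  rw [neg_div]
  rcases min_le_iff.mp (hS _ (mul_pos hr ht)) with hsmall | hlarge
  · have hquartic : a * t ^ n ≤ S (ν ^ (n⁻¹ : ℝ) * t) / ν := by
      rw [mul_pow, rpow_inv_natCast_pow hν0.le hn] at hsmall
      rw [le_div_iff₀ hν0]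
      linarith
    exact (exp_le_exp.mpr (neg_le_neg hquartic)).trans (le_add_of_nonneg_right (exp_pos _).le)
  · have hνr : ν ≤ ν ^ (n⁻¹ : ℝ) :=
      self_le_rpow_of_le_one hν0.le hν1 (inv_le_one_of_one_le₀ (mod_cast
        Nat.one_le_iff_ne_zero.mpr hn))
    have hlinear : b * t ≤ S (ν ^ (n⁻¹ : ℝ) * t) / ν := by
      rw [le_div_iff₀ hν0]
      nlinarith [mul_le_mul_of_nonneg_left hνr (mul_nonneg hb ht.le)]
    exact (exp_le_exp.mpr (neg_le_neg hlinear)).trans (le_add_of_nonneg_left (exp_pos _).le)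

lemma tendsto_rpow_inv_mul_nhdsGT {n : ℕ} (hn : n ≠ 0) {t : ℝ} (ht : 0 < t) :
    Tendsto (fun ν : ℝ => ν ^ (n⁻¹ : ℝ) * t) (𝓝[>] 0) (𝓝[>] 0) := by
  refine tendsto_nhdsWithin_iff.mpr ⟨?_, eventually_mem_nhdsWithin.mono fun ν hν =>
    mul_pos (rpow_pos_of_pos hν _) ht⟩
  have h := ((continuousAt_rpow_const 0 (n⁻¹ : ℝ) (Or.inr (by positivity))).tendsto.mul_const t)
  rw [zero_rpow (by positivity), zero_mul] at h
  exact h.mono_left nhdsWithin_le_nhds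

lemma tendsto_exp_neg_div_rescaled {S : ℝ → ℝ} {L : ℝ} {n : ℕ} (hn : n ≠ 0)
    (hlim : Tendsto (fun p : ℝ => S p / p ^ n) (𝓝[>] 0) (𝓝 L)) {t : ℝ} (ht : 0 < t) :
    Tendsto (fun ν : ℝ => exp (-S (ν ^ (n⁻¹ : ℝ) * t) / ν)) (𝓝[>] 0)
      (𝓝 (exp (-(L * t ^ n)))) := by
  have h := (hlim.comp (tendsto_rpow_inv_mul_nhdsGT hn ht)).mul_const (t ^ n) |>.neg.rexp
  refine h.congr' (eventually_mem_nhdsWithin.mono fun ν (hν : 0 < ν) => ?_)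
  have hscaled : (ν ^ (n⁻¹ : ℝ) * t) ^ n = ν * t ^ n := by
    rw [mul_pow, rpow_inv_natCast_pow hν.le hn]
  have htn : t ^ n ≠ 0 := by positivity
  simp only [Function.comp_apply, hscaled]
  field_simp

lemma tendsto_setIntegral_exp_neg_div_rescaled {S : ℝ → ℝ} (hcont : ContinuousOn S (Ioi 0))
    {L a b : ℝ} (ha : 0 < a) (hb : 0 < b) {n : ℕ} (hn : n ≠ 0)
    (hlim : Tendsto (fun p : ℝ => S p / p ^ n) (𝓝[>] 0) (𝓝 L))
    (hS : ∀ ξ > 0, min (a * ξ ^ n) (b * ξ) ≤ S ξ) (k : ℕ) :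
    Tendsto (fun ν : ℝ => ∫ t in Ioi 0, exp (-S (ν ^ (n⁻¹ : ℝ) * t) / ν) * t ^ k) (𝓝[>] 0)
      (𝓝 (∫ t in Ioi 0, exp (-(L * t ^ n)) * t ^ k)) := by
  refine tendsto_integral_filter_of_dominated_convergence
    (fun t => exp (-(a * t ^ n)) * t ^ k + exp (-(b * t)) * t ^ k) ?_ ?_ ?_ ?_
  · filter_upwards [self_mem_nhdsWithin] with ν (hν : 0 < ν)
    refine ContinuousOn.aestronglyMeasurable ?_ measurableSet_Ioi
    refine (continuous_exp.comp_continuousOn ((hcont.comp ?_ ?_).neg.div_const ν)).mul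
      (continuous_pow k).continuousOn
    · fun_prop
    · exact fun t ht => mul_pos (rpow_pos_of_pos hν _) ht
  · filter_upwards [Ioc_mem_nhdsGT zero_lt_one] with ν hν
    refine (ae_restrict_iff' measurableSet_Ioi).mpr (ae_of_all _ fun t (ht : 0 < t) => ?_)
    rw [norm_mul, norm_of_nonneg (exp_pos _).le, norm_of_nonneg (by positivity), ← add_mul]
    exact mul_le_mul_of_nonneg_right
      (exp_neg_div_le_of_min_pow_linear_le hn hb.le hS hν ht) (by positivity)
  · exact (integrableOn_exp_neg_mul_pow_mul_pow ha hn k).add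
      (by simpa using integrableOn_exp_neg_mul_pow_mul_pow hb one_ne_zero k)
  · exact (ae_restrict_iff' measurableSet_Ioi).mpr (ae_of_all _ fun t ht =>
      (tendsto_exp_neg_div_rescaled hn hlim ht).mul_const _)

theorem tendsto_rpow_mul_laplaceMoment {S : ℝ → ℝ} (hcont : ContinuousOn S (Ioi 0))
    (hpos : ∀ p : ℝ, 0 < p → 0 < S p) {L : ℝ} (hL : 0 < L) {n : ℕ} (hn : n ≠ 0)
    (hlim : Tendsto (fun p : ℝ => S p / p ^ n) (𝓝[>] 0) (𝓝 L))
    (hgrow : ∃ c > (0 : ℝ), ∃ R > (0 : ℝ), ∀ p ≥ R, c * p ≤ S p) (k : ℕ) :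
    Tendsto (fun ν : ℝ => ν ^ (-(k + 1 : ℝ) / n) * laplaceMoment S ν k) (𝓝[>] 0)
      (𝓝 (L ^ (-(k + 1 : ℝ) / n) * (1 / n) * Gamma ((k + 1) / n))) := by
  have hsmall : ∀ᶠ ξ in 𝓝[>] 0, L / 2 * ξ ^ n ≤ S ξ := by
    filter_upwards [hlim.eventually (eventually_gt_nhds (half_lt_self hL)),
      self_mem_nhdsWithin] with ξ hξ (hξ0 : 0 < ξ)
    exact ((lt_div_iff₀ (by positivity)).mp hξ).le
  obtain ⟨b, hb, hS⟩ := exists_min_pow_linear_le hcont hpos hsmall hgrow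
  rw [← integral_exp_neg_mul_pow_mul_pow hL hn k]
  refine (tendsto_setIntegral_exp_neg_div_rescaled hcont (half_pos hL) hb hn hlim hS k).congr' ?_
  filter_upwards [self_mem_nhdsWithin] with ν (hν : 0 < ν)
  have hscale : ν ^ (-(k + 1 : ℝ) / n) * (ν ^ (n⁻¹ : ℝ)) ^ (k + 1) = 1 := by
    rw [← rpow_natCast, ← rpow_mul hν.le, ← rpow_add hν]
    convert rpow_zero ν using 2
    push_cast
    ring
  rw [laplaceMoment, setIntegral_Ioi_mul_pow_comp_mul_left (fun ξ => exp (-S ξ / ν)) k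
    (rpow_pos_of_pos hν (n⁻¹ : ℝ)), ← mul_assoc, hscale, one_mul]

/-- Quartic (critical-point) Laplace asymptotics: if the positive continuous phase S̃
satisfies S̃(p)/p⁴ → L ∈ (0,∞) as p → 0⁺ and grows at least linearly at infinity,
then the Laplace quotient p_ν = (∫₀^∞ e^{−S̃(ξ)/ν} ξ dξ)/(∫₀^∞ e^{−S̃(ξ)/ν} dξ)
satisfies ν^{−1/4}·p_ν → L^{−1/4}·Γ(1/2)/Γ(1/4) as ν → 0⁺. -/
theorem laplace_quotient_quartic_scaling (S : ℝ → ℝ)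
    (hcont : ContinuousOn S (Set.Ioi 0)) (hpos : ∀ p : ℝ, 0 < p → 0 < S p)
    (L : ℝ) (hL : 0 < L)
    (hlim : Filter.Tendsto (fun p : ℝ => S p / p ^ 4)
      (nhdsWithin 0 (Set.Ioi 0)) (nhds L))
    (hgrow : ∃ c > (0 : ℝ), ∃ R > (0 : ℝ), ∀ p ≥ R, c * p ≤ S p) :
    Filter.Tendsto
      (fun ν : ℝ => ν ^ (-(1 / 4) : ℝ) *
        ((∫ ξ in Set.Ioi (0 : ℝ), Real.exp (-S ξ / ν) * ξ) /
          (∫ ξ in Set.Ioi (0 : ℝ), Real.exp (-S ξ / ν))))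
      (nhdsWithin 0 (Set.Ioi 0))
      (nhds (L ^ (-(1 / 4) : ℝ) * (Real.Gamma (1 / 2) / Real.Gamma (1 / 4)))) := by
  have hM (k : ℕ) := tendsto_rpow_mul_laplaceMoment hcont hpos hL four_ne_zero hlim hgrow k
  have hquot := (hM 1).div (hM 0)
    (mul_pos (mul_pos (rpow_pos_of_pos hL _) (by norm_num)) (Gamma_pos_of_pos (by norm_num))).ne'
  norm_num at hquot
  have hhalf {x : ℝ} (hx : 0 < x) :
      x ^ (-(1 / 2) : ℝ) = x ^ (-(1 / 4) : ℝ) * x ^ (-(1 / 4) : ℝ) := by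
    rw [← rpow_add hx]; norm_num
  convert hquot.congr' ?_ using 2
  · have := (rpow_pos_of_pos hL (-(1 / 4))).ne'
    rw [hhalf hL]
    field_simp
  · filter_upwards [self_mem_nhdsWithin] with ν (hν : 0 < ν)
    have := (rpow_pos_of_pos hν (-(1 / 4))).ne'
    simp only [Pi.div_apply, laplaceMoment, pow_one, pow_zero, mul_one, hhalf hν]
    field_simp
end

section
/- Let 0 < α < 1, b > 0 and k > 0. Then the integral ∫₀^∞ ( 1/(e^{bξ} − 1) − k/(e^{kbξ} − 1) ) · α ξ^{α−1} dξ converges absolutely and equals c(α) · (k^{1−α} − 1) · b^{−α}, where c(α) = ∫₀^∞ (1/η − 1/(e^η − 1)) · α η^{α−1} dη is a finite positive constant. -/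
open MeasureTheory Set Real

section aux

/-- exp x - 1 > x for x > 0 -/
private lemma exp_sub_one_gt {x : ℝ} (hx : 0 < x) : x < Real.exp x - 1 := by
  have := Real.add_one_lt_exp (x := x) hx.ne'
  linarith

private lemma h_pos {x : ℝ} (hx : 0 < x) : 0 < 1 / x - 1 / (Real.exp x - 1) := by
  have h1 : (0 : ℝ) < Real.exp x - 1 := lt_trans hx (exp_sub_one_gt hx)
  have := one_div_lt_one_div_of_lt hx (exp_sub_one_gt hx)
  linarith

private lemma h_le_one {x : ℝ} (hx : 0 < x) : 1 / x - 1 / (Real.exp x - 1) ≤ 1 := by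
  have h1 : (0 : ℝ) < Real.exp x - 1 := lt_trans hx (exp_sub_one_gt hx)
  have h2 : Real.exp x * (1 - x) ≤ 1 := by
    have := Real.add_one_le_exp (-x)
    have hex : 0 < Real.exp x := Real.exp_pos x
    have hmul : Real.exp x * Real.exp (-x) = 1 := by
      rw [← Real.exp_add]; simp
    nlinarith [hmul, Real.exp_pos (-x)]
  rw [div_sub_div _ _ hx.ne' h1.ne', div_le_one (by positivity)]
  nlinarith

private lemma h_le_inv {x : ℝ} (hx : 0 < x) : 1 / x - 1 / (Real.exp x - 1) ≤ 1 / x := by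
  have h1 : (0 : ℝ) < Real.exp x - 1 := lt_trans hx (exp_sub_one_gt hx)
  have : 0 < 1 / (Real.exp x - 1) := by positivity
  linarith

private lemma contOn (α : ℝ) :
    ContinuousOn (fun η : ℝ => (1 / η - 1 / (Real.exp η - 1)) * (α * η ^ (α - 1)))
      (Set.Ioi 0) := by
  apply ContinuousOn.mul
  · apply ContinuousOn.sub
    · exact continuousOn_const.div continuousOn_id (fun x hx => (mem_Ioi.mp hx).ne')
    · refine continuousOn_const.div ((Real.continuous_exp.continuousOn).sub continuousOn_const)
        (fun x hx => ?_)
      have := exp_sub_one_gt (mem_Ioi.mp hx)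
      have := mem_Ioi.mp hx
      linarith
  · exact continuousOn_const.mul (fun x hx => (Real.continuousAt_rpow_const x (α-1)
      (Or.inl (mem_Ioi.mp hx).ne')).continuousWithinAt)

private lemma base_integrable {α : ℝ} (hα : 0 < α) (hα1 : α < 1) :
    IntegrableOn (fun η : ℝ => (1 / η - 1 / (Real.exp η - 1)) * (α * η ^ (α - 1)))
      (Set.Ioi 0) := by
  have hmeas : ∀ s ⊆ Set.Ioi (0:ℝ), MeasurableSet s → AEStronglyMeasurable
      (fun η : ℝ => (1 / η - 1 / (Real.exp η - 1)) * (α * η ^ (α - 1)))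
      (volume.restrict s) := fun s hs hms =>
    ((contOn α).mono hs).aestronglyMeasurable hms
  rw [show Set.Ioi (0:ℝ) = Set.Ioc 0 1 ∪ Set.Ioi 1 from (Set.Ioc_union_Ioi_eq_Ioi zero_le_one).symm]
  apply IntegrableOn.union
  · -- on (0,1]: dominated by α * η^(α-1)
    have hmaj : IntegrableOn (fun η : ℝ => α * η ^ (α - 1)) (Set.Ioc 0 1) := by
      rw [integrableOn_Ioc_iff_integrableOn_Ioo]
      exact ((intervalIntegral.integrableOn_Ioo_rpow_iff one_pos).mpr (by linarith)).const_mul α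
    refine hmaj.mono' (hmeas _ Set.Ioc_subset_Ioi_self measurableSet_Ioc) ?_
    filter_upwards [ae_restrict_mem measurableSet_Ioc] with x hx
    have hx0 : 0 < x := hx.1
    have hp := h_pos hx0
    have hl := h_le_one hx0
    have hr : 0 ≤ α * x ^ (α - 1) := by positivity
    rw [Real.norm_eq_abs, abs_mul, abs_of_pos hp, abs_of_nonneg hr]
    nlinarith
  · -- on (1,∞): dominated by α * η^(α-2)
    have hmaj : IntegrableOn (fun η : ℝ => α * η ^ (α - 2)) (Set.Ioi 1) :=
      ((integrableOn_Ioi_rpow_iff one_pos).mpr (by linarith)).const_mul α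
    refine hmaj.mono' (hmeas _ (Set.Ioi_subset_Ioi zero_le_one) measurableSet_Ioi) ?_
    filter_upwards [ae_restrict_mem measurableSet_Ioi] with x hx
    have hx1 : (1:ℝ) < x := hx
    have hx0 : 0 < x := lt_trans one_pos hx1
    have hp := h_pos hx0
    have hl := h_le_inv hx0
    have hr : 0 ≤ α * x ^ (α - 1) := by positivity
    rw [Real.norm_eq_abs, abs_mul, abs_of_pos hp, abs_of_nonneg hr]
    have key : (1 / x) * (α * x ^ (α - 1)) = α * x ^ (α - 2) := by
      rw [show α - 2 = (α - 1) + (-1) by ring, Real.rpow_add hx0, Real.rpow_neg_one]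
      ring
    calc (1 / x - 1 / (Real.exp x - 1)) * (α * x ^ (α - 1))
        ≤ (1 / x) * (α * x ^ (α - 1)) := mul_le_mul_of_nonneg_right hl hr
      _ = α * x ^ (α - 2) := key

private lemma comp_integral {α c : ℝ} (hα : 0 < α) (hα1 : α < 1) (hc : 0 < c) :
    IntegrableOn (fun ξ : ℝ => (1 / (c * ξ) - 1 / (Real.exp (c * ξ) - 1)) * (α * ξ ^ (α - 1)))
      (Set.Ioi 0) ∧
    (∫ ξ in Set.Ioi (0:ℝ), (1 / (c * ξ) - 1 / (Real.exp (c * ξ) - 1)) * (α * ξ ^ (α - 1))) =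
      c ^ (-α) * ∫ η in Set.Ioi (0:ℝ), (1 / η - 1 / (Real.exp η - 1)) * (α * η ^ (α - 1)) := by
  set G : ℝ → ℝ := fun x => ((1 / x - 1 / (Real.exp x - 1)) * (α * x ^ (α - 1))) * c ^ (1 - α)
    with hG
  have hGint : IntegrableOn G (Set.Ioi 0) := (base_integrable hα hα1).mul_const _
  have heq : ∀ ξ ∈ Set.Ioi (0:ℝ),
      (1 / (c * ξ) - 1 / (Real.exp (c * ξ) - 1)) * (α * ξ ^ (α - 1)) = G (c * ξ) := by
    intro ξ hξ
    have hξ0 : 0 < ξ := hξ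
    have hcx : ((c * ξ) : ℝ) ^ (α - 1) = c ^ (α - 1) * ξ ^ (α - 1) :=
      Real.mul_rpow hc.le hξ0.le
    have hc1 : c ^ (α - 1) * c ^ (1 - α) = 1 := by
      rw [← Real.rpow_add hc]; norm_num
    simp only [hG, hcx]
    linear_combination (1 / (Real.exp (c * ξ) - 1) - 1 / (c * ξ)) * α * ξ ^ (α - 1) * hc1
  constructor
  · rw [integrableOn_congr_fun heq measurableSet_Ioi]
    have := (MeasureTheory.integrableOn_Ioi_comp_mul_left_iff G 0 hc).mpr
    simpa using this (by simpa using hGint)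
  · rw [setIntegral_congr_fun measurableSet_Ioi heq,
      MeasureTheory.integral_comp_mul_left_Ioi G 0 hc]
    simp only [mul_zero, smul_eq_mul, hG]
    rw [MeasureTheory.integral_mul_const]
    rw [show c⁻¹ = c ^ (-1 : ℝ) by rw [Real.rpow_neg_one]]
    rw [mul_left_comm, ← Real.rpow_add hc, show (-1 : ℝ) + (1 - α) = -α by ring, mul_comm]

private lemma base_pos {α : ℝ} (hα : 0 < α) (hα1 : α < 1) :
    0 < ∫ η in Set.Ioi (0:ℝ), (1 / η - 1 / (Real.exp η - 1)) * (α * η ^ (α - 1)) := by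
  rw [setIntegral_pos_iff_support_of_nonneg_ae ?_ (base_integrable hα hα1)]
  · have hsub : Set.Ioi (0:ℝ) ⊆ Function.support
        (fun η : ℝ => (1 / η - 1 / (Real.exp η - 1)) * (α * η ^ (α - 1))) := by
      intro x hx
      have hx0 : 0 < x := hx
      have := h_pos hx0
      have : 0 < (1 / x - 1 / (Real.exp x - 1)) * (α * x ^ (α - 1)) := by
        have := Real.rpow_pos_of_pos hx0 (α - 1); positivity
      exact this.ne'
    rw [Set.inter_eq_right.mpr hsub, Real.volume_Ioi]
    exact ENNReal.zero_lt_top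
  · filter_upwards [ae_restrict_mem measurableSet_Ioi] with x hx
    have hx0 : (0:ℝ) < x := hx
    have := h_pos hx0
    have hr := Real.rpow_pos_of_pos hx0 (α - 1)
    positivity

end aux

/-- Key integral identity of Section 5 of the paper: for 0 < α < 1, b > 0, k > 0,
the integral ∫₀^∞ (1/(e^{bξ}−1) − k/(e^{kbξ}−1))·αξ^{α−1} dξ converges absolutely
and equals c(α)·(k^{1−α} − 1)·b^{−α}, where
c(α) = ∫₀^∞ (1/η − 1/(e^η−1))·αη^{α−1} dη is a finite positive constant. -/
theorem truncated_bose_integral_identity (α b k : ℝ)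
    (hα : 0 < α) (hα1 : α < 1) (hb : 0 < b) (hk : 0 < k) :
    MeasureTheory.IntegrableOn
      (fun ξ : ℝ =>
        (1 / (Real.exp (b * ξ) - 1) - k / (Real.exp (k * b * ξ) - 1)) *
          (α * ξ ^ (α - 1)))
      (Set.Ioi 0) ∧
    MeasureTheory.IntegrableOn
      (fun η : ℝ => (1 / η - 1 / (Real.exp η - 1)) * (α * η ^ (α - 1)))
      (Set.Ioi 0) ∧
    0 < (∫ η in Set.Ioi (0 : ℝ),
          (1 / η - 1 / (Real.exp η - 1)) * (α * η ^ (α - 1))) ∧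
    (∫ ξ in Set.Ioi (0 : ℝ),
        (1 / (Real.exp (b * ξ) - 1) - k / (Real.exp (k * b * ξ) - 1)) *
          (α * ξ ^ (α - 1))) =
      (∫ η in Set.Ioi (0 : ℝ),
          (1 / η - 1 / (Real.exp η - 1)) * (α * η ^ (α - 1))) *
        (k ^ (1 - α) - 1) * b ^ (-α) := by
  have hkb : 0 < k * b := mul_pos hk hb
  obtain ⟨hint_kb, hval_kb⟩ := comp_integral hα hα1 hkb
  obtain ⟨hint_b, hval_b⟩ := comp_integral hα hα1 hb
  have heq : ∀ ξ ∈ Set.Ioi (0:ℝ),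
      (1 / (Real.exp (b * ξ) - 1) - k / (Real.exp (k * b * ξ) - 1)) * (α * ξ ^ (α - 1)) =
      k * ((1 / (k * b * ξ) - 1 / (Real.exp (k * b * ξ) - 1)) * (α * ξ ^ (α - 1))) -
        (1 / (b * ξ) - 1 / (Real.exp (b * ξ) - 1)) * (α * ξ ^ (α - 1)) := by
    intro ξ hξ
    have hξ0 : (0:ℝ) < ξ := hξ
    have h1 : k * (1 / (k * b * ξ)) = 1 / (b * ξ) := by
      field_simp
    linear_combination (-(α * ξ ^ (α - 1))) * h1
  have hint : MeasureTheory.IntegrableOn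
      (fun ξ : ℝ =>
        (1 / (Real.exp (b * ξ) - 1) - k / (Real.exp (k * b * ξ) - 1)) *
          (α * ξ ^ (α - 1))) (Set.Ioi 0) := by
    rw [integrableOn_congr_fun heq measurableSet_Ioi]
    exact (hint_kb.const_mul k).sub hint_b
  refine ⟨hint, base_integrable hα hα1, base_pos hα hα1, ?_⟩
  rw [setIntegral_congr_fun measurableSet_Ioi heq,
    MeasureTheory.integral_sub (hint_kb.const_mul k) hint_b,
    MeasureTheory.integral_const_mul, hval_kb, hval_b,
    Real.mul_rpow hk.le hb.le]
  have e2 : k * k ^ (-α) = k ^ (1 - α) := by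
    nth_rewrite 1 [← Real.rpow_one k]
    rw [← Real.rpow_add hk, show (1:ℝ) + -α = 1 - α by ring]
  set C := ∫ η in Set.Ioi (0:ℝ), (1 / η - 1 / (Real.exp η - 1)) * (α * η ^ (α - 1))
  linear_combination C * b ^ (-α) * e2
end
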